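/- Let 1 → A → G → Q → 1 be a short exact sequence of groups with A abelian, Q finite of order n, and suppose multiplication by n is an automorphism of A. Then for every subgroup H of Q, the induced extension of H by A splits; in particular the original extension splits. -/

import Mathlib

/-!
This is the abelian case of Schur–Zassenhaus, with coprimality replaced by bijectivity of the
`n`-th power map, so that `A` may be infinite. Left transversals of `A`, modulo the relation
"the product of the quotients of corresponding representatives is `1`", form a `G`-set on which
`a ∈ A` acts as translation by `a ^ n`. Bijectivity of `a ↦ a ^ n` makes this action of `A`
simply transitive, so the stabilizer of a point is a complement of `A`, i.e. a splitting.
For a subgroup `H` of `G ⧸ A`, the same applies to `A` inside the preimage of `H`, where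
`A` has index `|H|` and `a ↦ a ^ |H|` is bijective because `|H|` divides `n`.
-/

open Function

theorem bijective_pow_of_dvd {M : Type*} [Monoid M] {m n : ℕ} (hmn : m ∣ n)
    (h : Bijective fun x : M => x ^ n) : Bijective fun x : M => x ^ m := by
  obtain ⟨k, rfl⟩ := hmn
  refine ⟨Injective.of_comp (f := fun x : M => x ^ k) ?_,
    Surjective.of_comp (g := fun x : M => x ^ k) ?_⟩
  · simpa only [comp_def, ← pow_mul] using h.1
  · simpa only [comp_def, ← pow_mul, mul_comm k] using h.2

theorem MulEquiv.bijective_pow {M N : Type*} [Monoid M] [Monoid N] (e : M ≃* N) {n : ℕ}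
    (h : Bijective fun y : N => y ^ n) : Bijective fun x : M => x ^ n := by
  have : (fun x : M => x ^ n) = e.symm ∘ (fun y : N => y ^ n) ∘ e := by
    funext x; simp only [comp_apply, map_pow, e.symm_apply_apply]
  rw [this]
  exact e.symm.bijective.comp (h.comp e.bijective)

namespace Subgroup

open MulOpposite leftTransversals
open scoped IsMulCommutative

variable {G : Type*} [Group G] {N : Subgroup G} [N.Normal] [IsMulCommutative N] [N.FiniteIndex]

theorem eq_one_of_smul_eq_one_of_injective_pow (hN : Injective fun a : N => a ^ N.index)
    (α : N.QuotientDiff) (a : N) : a • α = α → a = 1 :=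
  Quotient.inductionOn' α fun α hα =>
    hN <|
      calc
        a ^ N.index = diff (MonoidHom.id N) (op ((a⁻¹ : N) : G) • α) α := by
          rw [← diff_inv, smul_diff', diff_self, one_mul, inv_pow, inv_inv]
        _ = 1 ^ N.index := (Quotient.exact' hα).trans (one_pow N.index).symm

theorem exists_smul_eq_of_surjective_pow (hN : Surjective fun a : N => a ^ N.index)
    (α β : N.QuotientDiff) : ∃ a : N, a • α = β :=
  Quotient.inductionOn₂' α β fun α β => by
    obtain ⟨a, ha : a ^ N.index = _⟩ := hN (diff (MonoidHom.id N) β α)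
    refine ⟨a, Quotient.sound' ?_⟩
    show diff (MonoidHom.id N) (op ((a : G)⁻¹) • α) β = 1
    rw [← diff_inv, inv_eq_one]
    exact (smul_diff' β α a⁻¹).trans (by rw [inv_pow, ha, mul_inv_cancel])

theorem exists_isComplement'_of_bijective_pow (hN : Bijective fun a : N => a ^ N.index) :
    ∃ K : Subgroup G, IsComplement' N K :=
  let α : N.QuotientDiff := default
  ⟨MulAction.stabilizer G α, isComplement'_stabilizer α
    (eq_one_of_smul_eq_one_of_injective_pow hN.1 α)
    fun g => exists_smul_eq_of_surjective_pow hN.2 (g • α) α⟩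

end Subgroup

theorem Subgroup.IsComplement'.exists_comp_eq_id {G Q : Type*} [Group G] [Group Q] {f : G →* Q}
    (hf : Surjective f) {K : Subgroup G} (hK : IsComplement' f.ker K) :
    ∃ s : Q →* G, f.comp s = MonoidHom.id Q := by
  have hinj : Injective (f.comp K.subtype) := by
    refine (injective_iff_map_eq_one _).mpr fun k hk => ?_
    exact Subtype.ext (hK.disjoint.le_bot ⟨hk, k.2⟩)
  have hsurj : Surjective (f.comp K.subtype) := by
    intro q
    obtain ⟨g, rfl⟩ := hf q
    obtain ⟨⟨n, k⟩, rfl⟩ := hK.2 g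
    exact ⟨k, by simp [f.mem_ker.mp n.2]⟩
  let e := MulEquiv.ofBijective _ ⟨hinj, hsurj⟩
  exact ⟨K.subtype.comp e.symm.toMonoidHom, MonoidHom.ext e.apply_symm_apply⟩

theorem MonoidHom.exists_comp_eq_id_of_bijective_pow {G Q : Type*} [Group G] [Group Q] [Finite Q]
    (f : G →* Q) (hf : Surjective f) {N : Subgroup G} [IsMulCommutative N] (hker : f.ker = N)
    (hN : Bijective fun a : N => a ^ Nat.card Q) :
    ∃ s : Q →* G, f.comp s = MonoidHom.id Q := by
  subst hker
  have hindex : f.ker.index = Nat.card Q := by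
    rw [Subgroup.index_ker, f.range_eq_top_of_surjective hf, Subgroup.card_top]
  have : f.ker.FiniteIndex := ⟨hindex ▸ Nat.card_pos.ne'⟩
  obtain ⟨K, hK⟩ := Subgroup.exists_isComplement'_of_bijective_pow (hindex ▸ hN)
  exact hK.exists_comp_eq_id hf

theorem stmt_13 {G : Type*} [Group G] (A : Subgroup G) [A.Normal]
    (hA : ∀ a b : A, a * b = b * a) [Finite (G ⧸ A)]
    (h : Function.Bijective (fun a : A => a ^ Nat.card (G ⧸ A))) :
    (∀ H : Subgroup (G ⧸ A), ∃ s : H →* G,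
      ∀ x : H, QuotientGroup.mk (s x) = (x : G ⧸ A)) ∧
    (∃ s : (G ⧸ A) →* G, (QuotientGroup.mk' A).comp s = MonoidHom.id (G ⧸ A)) := by
  have : IsMulCommutative A := isMulCommutative_iff.mpr hA
  refine ⟨fun H => ?_, (QuotientGroup.mk' A).exists_comp_eq_id_of_bijective_pow
    (QuotientGroup.mk'_surjective A) (QuotientGroup.ker_mk' A) h⟩
  set P := H.comap (QuotientGroup.mk' A)
  have hAP : A ≤ P := fun a ha => by simp [P, (QuotientGroup.eq_one_iff a).mpr ha, H.one_mem]
  have hker : ((QuotientGroup.mk' A).subgroupComap H).ker = A.subgroupOf P := by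
    ext x
    rw [MonoidHom.mem_ker, Subgroup.mem_subgroupOf, ← QuotientGroup.eq_one_iff, Subtype.ext_iff]
    rfl
  have hpow : Bijective fun a : A.subgroupOf P => a ^ Nat.card H :=
    (Subgroup.subgroupOfEquivOfLe hAP).bijective_pow
      (bijective_pow_of_dvd (Subgroup.card_subgroup_dvd_card H) h)
  obtain ⟨s, hs⟩ := ((QuotientGroup.mk' A).subgroupComap H).exists_comp_eq_id_of_bijective_pow
    ((QuotientGroup.mk' A).subgroupComap_surjective_of_surjective H
      (QuotientGroup.mk'_surjective A)) hker hpow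
  exact ⟨P.subtype.comp s, fun x => congrArg Subtype.val (DFunLike.congr_fun hs x)⟩
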